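/- arXiv:1210.3426 — 5 statements merged into one kernel-verified Lean document; each statement's English description precedes it below -/
import Mathlib

section
/- Let M ∈ Mat_n(ℂ) be symmetric with positive-definite real part. Then for every u ∈ ℂⁿ both Gaussian integrals below converge absolutely and their product equals 1: [ (2πħ)^(−n/2) ∫_{ℝⁿ} exp(−(1/(4ħ)) ξMξᵀ) dξ ] · [ (2πħ)^(−n/2) ∫_{ℝⁿ} exp(−(1/ħ) (u−x) M⁻¹ (u−x)ᵀ) dx ] = 1. (This is the paper's identity ∫_{ℝⁿ} δ*(u−x) d̄x = 1 for the star-delta function of full variables, with M = iK.) -/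
/-!
Since `Re M` is positive definite and `Im M` is symmetric, a single real congruence `P`
diagonalizes both, so `Pᵀ M P = diag λ` with `λⱼ = 1 + i dⱼ`, and then `P⁻ᵀ` diagonalizes `M⁻¹`
with eigenvalues `λⱼ⁻¹`. The substitutions `ξ = P η` and `x = P⁻ᵀ y` split both integrals into
one-dimensional Gaussians (the complex shift by `u` is harmless), giving
`|det P| ∏ⱼ (4πħ/λⱼ)^(1/2)` and `|det P|⁻¹ ∏ⱼ (πħλⱼ)^(1/2)`. As `Re λⱼ > 0`, the principal square
roots of each pair multiply to `(4π²ħ²)^(1/2) = 2πħ`, which is cancelled by the normalization.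
-/

open MeasureTheory

noncomputable section

/-- The bilinear form `a M bᵀ = ∑ᵢⱼ aᵢ Mᵢⱼ bⱼ` (no conjugation). -/
def bil {n : ℕ} (M : Matrix (Fin n) (Fin n) ℂ) (a b : Fin n → ℂ) : ℂ :=
  ∑ i, ∑ j, a i * M i j * b j

/-- Inclusion of a real row vector into ℂⁿ. -/
def cvec {n : ℕ} (x : Fin n → ℝ) : Fin n → ℂ := fun i => (x i : ℂ)

open Matrix Complex Real
open scoped MatrixOrder

section Diagonalization

variable {ι : Type*} [Fintype ι] [DecidableEq ι]

theorem Matrix.PosDef.exists_transpose_mul_mul_eq_one_and_diagonal {A B : Matrix ι ι ℝ}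
    (hA : A.PosDef) (hB : B.IsSymm) :
    ∃ (P : Matrix ι ι ℝ) (d : ι → ℝ), IsUnit P ∧ Pᵀ * A * P = 1 ∧ Pᵀ * B * P = diagonal d := by
  obtain ⟨Y, hY, rfl⟩ :=
    CStarAlgebra.isStrictlyPositive_iff_eq_star_mul_self.mp hA.isStrictlyPositive
  -- with `A = Yᵀ Y`, congruence by `Y⁻¹` turns `A` into `1`; an orthonormal eigenbasis then
  -- diagonalizes the transformed `B` without spoiling this
  have hYdet : IsUnit Y.det := (isUnit_iff_isUnit_det Y).1 hY
  set C := (Y⁻¹)ᵀ * B * Y⁻¹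
  have hC : C.IsHermitian := isHermitian_iff_isSymm.2 <| by
    simp only [IsSymm, C, transpose_mul, transpose_transpose, hB.eq, mul_assoc]
  set U : Matrix ι ι ℝ := (hC.eigenvectorUnitary : Matrix ι ι ℝ)
  have hU : Uᵀ * U = 1 := by
    simpa [star_eq_conjTranspose, conjTranspose_eq_transpose_of_trivial] using
      (mem_unitaryGroup_iff'.mp hC.eigenvectorUnitary.2)
  have hUC : Uᵀ * C * U = diagonal hC.eigenvalues := by
    have := hC.conjStarAlgAut_star_eigenvectorUnitary
    rw [Unitary.conjStarAlgAut_star_apply] at this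
    simpa [U, star_eq_conjTranspose, conjTranspose_eq_transpose_of_trivial] using this
  have hYinv : Y * Y⁻¹ = 1 := mul_nonsing_inv Y hYdet
  refine ⟨Y⁻¹ * U, hC.eigenvalues, (isUnit_nonsing_inv_iff.2 hY).mul ?_, ?_, ?_⟩
  · exact Unitary.isUnit_coe
  · rw [star_eq_conjTranspose, conjTranspose_eq_transpose_of_trivial]
    calc (Y⁻¹ * U)ᵀ * (Yᵀ * Y) * (Y⁻¹ * U) = Uᵀ * ((Y * Y⁻¹)ᵀ * (Y * Y⁻¹)) * U := by
          simp only [transpose_mul, Matrix.mul_assoc]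
      _ = 1 := by rw [hYinv, transpose_one, Matrix.mul_one, Matrix.mul_one, hU]
  · rw [← hUC, transpose_mul]
    simp only [C, Matrix.mul_assoc]

omit [DecidableEq ι] in
theorem Matrix.map_ofReal_mul (X Y : Matrix ι ι ℝ) :
    (X * Y).map ofReal = X.map ofReal * Y.map ofReal :=
  Matrix.map_mul (f := ofRealHom)

theorem Matrix.map_ofReal_nonsing_inv (P : Matrix ι ι ℝ) : P⁻¹.map ofReal = (P.map ofReal)⁻¹ := by
  by_cases h : IsUnit P.det
  · exact (inv_eq_right_inv (by rw [← map_ofReal_mul, mul_nonsing_inv P h]; simp)).symm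
  · have hc : ¬IsUnit (P.map ofReal).det := by
      rw [show (P.map ofReal).det = P.det from (RingHom.map_det ofRealHom P).symm]
      simpa [isUnit_iff_ne_zero] using h
    rw [nonsing_inv_apply_not_isUnit _ h, nonsing_inv_apply_not_isUnit _ hc]
    simp

omit [DecidableEq ι] in
theorem Matrix.IsSymm.posDef_map_re {M : Matrix ι ι ℂ} (hM : M.IsSymm)
    (hpos : ∀ ξ : ι → ℝ, ξ ≠ 0 → 0 < ∑ i, ∑ j, ξ i * (M i j).re * ξ j) :
    (M.map re).PosDef := by
  refine .of_dotProduct_mulVec_pos (isHermitian_iff_isSymm.2 (hM.map re)) fun ξ hξ => ?_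
  simpa [dotProduct, mulVec, Finset.mul_sum, mul_assoc] using hpos ξ hξ

theorem Matrix.IsSymm.exists_transpose_mul_mul_eq_diagonal {M : Matrix ι ι ℂ} (hM : M.IsSymm)
    (hre : (M.map re).PosDef) :
    ∃ (P : Matrix ι ι ℝ) (d : ι → ℝ), IsUnit P ∧
      (P.map ofReal)ᵀ * M * P.map ofReal = diagonal fun i => 1 + d i * I := by
  obtain ⟨P, d, hP, hPA, hPB⟩ :=
    hre.exists_transpose_mul_mul_eq_one_and_diagonal (hM.map im)
  refine ⟨P, d, hP, ?_⟩
  have hM_split : M = (M.map re).map ofReal + I • (M.map im).map ofReal := by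
    ext i j
    simp [mul_comm I, re_add_im]
  have hmap : ∀ X : Matrix ι ι ℝ, (P.map ofReal)ᵀ * X.map ofReal * P.map ofReal
      = (Pᵀ * X * P).map ofReal := fun X => by
    rw [← transpose_map, map_ofReal_mul, map_ofReal_mul]
  rw [hM_split, Matrix.mul_add, Matrix.add_mul, Matrix.mul_smul, Matrix.smul_mul, hmap, hmap,
    hPA, hPB]
  ext i j
  rcases eq_or_ne i j with rfl | h
  · simp [mul_comm]
  · simp [one_apply_ne h, diagonal_apply_ne _ h]

theorem Matrix.transpose_mul_inv_mul_eq_diagonal_inv {N : Matrix ι ι ℂ} {P : Matrix ι ι ℝ}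
    {μ : ι → ℂ} (hμ : ∀ i, μ i ≠ 0) (hPN : (P.map ofReal)ᵀ * N * P.map ofReal = diagonal μ) :
    (P⁻¹ᵀ.map ofReal)ᵀ * N⁻¹ * P⁻¹ᵀ.map ofReal = diagonal fun i => (μ i)⁻¹ := by
  simp only [transpose_map, transpose_transpose, map_ofReal_nonsing_inv, transpose_nonsing_inv]
  rw [← Matrix.mul_inv_rev, ← Matrix.mul_inv_rev, ← Matrix.mul_assoc, hPN]
  refine inv_eq_right_inv ?_
  rw [diagonal_mul_diagonal, ← diagonal_one]
  exact congrArg diagonal (funext fun i => mul_inv_cancel₀ (hμ i))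

end Diagonalization

section ChangeOfVariables

variable {ι E : Type*} [Fintype ι] [DecidableEq ι] [NormedAddCommGroup E]
  {Q : Matrix ι ι ℝ}

theorem Matrix.measurableEmbedding_toLin' (hQ : Q.det ≠ 0) :
    MeasurableEmbedding (toLin' Q) :=
  (toLinearEquiv' Q (invertibleOfIsUnitDet Q hQ.isUnit)).toContinuousLinearEquiv.toHomeomorph
    |>.measurableEmbedding

theorem Matrix.integrable_comp_mulVec_iff (hQ : Q.det ≠ 0) {f : (ι → ℝ) → E} :
    Integrable (fun x => f (Q *ᵥ x)) ↔ Integrable f := by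
  have h := (measurableEmbedding_toLin' hQ).integrable_map_iff (g := f) (μ := volume)
  rwa [Real.map_matrix_volume_pi_eq_smul_volume_pi hQ,
    integrable_smul_measure (by simp [hQ]) ENNReal.ofReal_ne_top, Iff.comm] at h

theorem Matrix.integral_comp_mulVec [NormedSpace ℝ E] (hQ : Q.det ≠ 0) (f : (ι → ℝ) → E) :
    ∫ x, f (Q *ᵥ x) = |Q.det|⁻¹ • ∫ x, f x := by
  have h := (measurableEmbedding_toLin' hQ).integral_map (μ := volume) f
  rw [Real.map_matrix_volume_pi_eq_smul_volume_pi hQ, integral_smul_measure,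
    ENNReal.toReal_ofReal (abs_nonneg _), abs_inv] at h
  simpa only [toLin'_apply] using h.symm

end ChangeOfVariables

section Gaussian

variable {ι : Type*} [Fintype ι] {b : ι → ℂ}

theorem cexp_sum_neg_mul_sub_sq (b c : ι → ℂ) (y : ι → ℝ) :
    cexp (∑ i, -b i * (c i - y i) ^ 2) =
      cexp (-∑ i, b i * (y i : ℂ) ^ 2 + ∑ i, 2 * b i * c i * y i) *
        cexp (-∑ i, b i * c i ^ 2) := by
  rw [← Complex.exp_add]
  congr 1
  simp only [← Finset.sum_neg_distrib, ← Finset.sum_add_distrib]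
  exact Finset.sum_congr rfl fun i _ => by ring

theorem integrable_cexp_neg_sum_mul_sub_sq (hb : ∀ i, 0 < (b i).re) (c : ι → ℂ) :
    Integrable (fun y : ι → ℝ => cexp (∑ i, -b i * (c i - y i) ^ 2)) := by
  simp only [cexp_sum_neg_mul_sub_sq]
  exact (GaussianFourier.integrable_cexp_neg_sum_mul_add hb _).mul_const _

theorem integral_cexp_neg_sum_mul_sub_sq (hb : ∀ i, 0 < (b i).re) (c : ι → ℂ) :
    ∫ y : ι → ℝ, cexp (∑ i, -b i * (c i - y i) ^ 2) = ∏ i, (π / b i) ^ (1 / 2 : ℂ) := by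
  simp only [cexp_sum_neg_mul_sub_sq]
  rw [integral_mul_const, GaussianFourier.integral_cexp_neg_sum_mul_add hb,
    Finset.prod_mul_distrib, ← Complex.exp_sum, mul_assoc, ← Complex.exp_add,
    ← Finset.sum_neg_distrib, ← Finset.sum_add_distrib]
  have hcancel : ∀ i, (2 * b i * c i) ^ 2 / (4 * b i) + -(b i * c i ^ 2) = 0 := fun i => by
    have hbi : b i ≠ 0 := fun h => by simpa [h] using hb i
    field_simp
    ring
  simp [hcancel]

end Gaussian

theorem Complex.mul_cpow_of_re_pos {z w : ℂ} (hz : 0 < z.re) (hw : 0 < w.re) (r : ℂ) :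
    (z * w) ^ r = z ^ r * w ^ r := by
  have hz0 : z ≠ 0 := fun h => by simp [h] at hz
  have hw0 : w ≠ 0 := fun h => by simp [h] at hw
  have hargz := abs_lt.1 (abs_arg_lt_pi_div_two_iff.2 (Or.inl hz))
  have hargw := abs_lt.1 (abs_arg_lt_pi_div_two_iff.2 (Or.inl hw))
  have harg : z.arg + w.arg ∈ Set.Ioc (-π) π := ⟨by linarith, by linarith⟩
  rw [cpow_def_of_ne_zero hz0, cpow_def_of_ne_zero hw0, cpow_def_of_ne_zero (mul_ne_zero hz0 hw0),
    ← Complex.exp_add, log_mul hz0 hw0 harg, add_mul]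

section QuadraticForm

variable {n : ℕ}

theorem bil_eq_dotProduct (M : Matrix (Fin n) (Fin n) ℂ) (a b : Fin n → ℂ) :
    bil M a b = a ⬝ᵥ M *ᵥ b := by
  simp only [bil, dotProduct, mulVec, Finset.mul_sum, mul_assoc]

theorem bil_mulVec (M Q : Matrix (Fin n) (Fin n) ℂ) (a b : Fin n → ℂ) :
    bil M (Q *ᵥ a) (Q *ᵥ b) = bil (Qᵀ * M * Q) a b := by
  rw [bil_eq_dotProduct, bil_eq_dotProduct, ← mulVec_mulVec, ← mulVec_mulVec,
    dotProduct_mulVec a Qᵀ, vecMul_transpose]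

theorem bil_diagonal (μ a b : Fin n → ℂ) : bil (diagonal μ) a b = ∑ i, μ i * a i * b i := by
  simp [bil, diagonal_apply, mul_comm]

theorem bil_neg_neg (M : Matrix (Fin n) (Fin n) ℂ) (a b : Fin n → ℂ) :
    bil M (-a) (-b) = bil M a b := by
  simp [bil]

theorem cvec_mulVec (Q : Matrix (Fin n) (Fin n) ℝ) (x : Fin n → ℝ) :
    cvec (Q *ᵥ x) = Q.map ofReal *ᵥ cvec x := by
  ext i
  simp [cvec, mulVec, dotProduct]

end QuadraticForm

section GaussianQuadraticForm

variable {n : ℕ} {N : Matrix (Fin n) (Fin n) ℂ} {P : Matrix (Fin n) (Fin n) ℝ} {μ : Fin n → ℂ}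
  {s : ℂ}

theorem cexp_neg_mul_bil_comp_mulVec (hP : IsUnit P)
    (hPN : (P.map ofReal)ᵀ * N * P.map ofReal = diagonal μ) (c : Fin n → ℂ) (y : Fin n → ℝ) :
    cexp (-s * bil N (c - cvec (P *ᵥ y)) (c - cvec (P *ᵥ y))) =
      cexp (∑ i, -(s * μ i) * ((P⁻¹.map ofReal *ᵥ c) i - y i) ^ 2) := by
  have hPP : P.map ofReal * P⁻¹.map ofReal = 1 := by
    rw [← map_ofReal_mul, mul_nonsing_inv P ((isUnit_iff_isUnit_det P).1 hP)]
    simp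
  have hc : c - cvec (P *ᵥ y) = P.map ofReal *ᵥ (P⁻¹.map ofReal *ᵥ c - cvec y) := by
    rw [mulVec_sub, mulVec_mulVec, hPP, one_mulVec, cvec_mulVec]
  rw [hc, bil_mulVec, hPN, bil_diagonal, Finset.mul_sum]
  congr 1
  refine Finset.sum_congr rfl fun i _ => ?_
  simp only [Pi.sub_apply, cvec]
  ring

theorem integrable_cexp_neg_mul_bil (hP : IsUnit P)
    (hPN : (P.map ofReal)ᵀ * N * P.map ofReal = diagonal μ) (hμ : ∀ i, 0 < (s * μ i).re)
    (c : Fin n → ℂ) :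
    Integrable (fun x : Fin n → ℝ => cexp (-s * bil N (c - cvec x) (c - cvec x))) := by
  rw [← integrable_comp_mulVec_iff ((isUnit_iff_isUnit_det P).1 hP).ne_zero]
  simp only [cexp_neg_mul_bil_comp_mulVec hP hPN]
  exact integrable_cexp_neg_sum_mul_sub_sq hμ _

theorem integral_cexp_neg_mul_bil (hP : IsUnit P)
    (hPN : (P.map ofReal)ᵀ * N * P.map ofReal = diagonal μ) (hμ : ∀ i, 0 < (s * μ i).re)
    (c : Fin n → ℂ) :
    ∫ x : Fin n → ℝ, cexp (-s * bil N (c - cvec x) (c - cvec x)) =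
      |P.det| * ∏ i, (π / (s * μ i)) ^ (1 / 2 : ℂ) := by
  have hdet := ((isUnit_iff_isUnit_det P).1 hP).ne_zero
  have h := integral_comp_mulVec hdet fun x => cexp (-s * bil N (c - cvec x) (c - cvec x))
  simp only [cexp_neg_mul_bil_comp_mulVec hP hPN, integral_cexp_neg_sum_mul_sub_sq hμ] at h
  rw [h, real_smul, ← mul_assoc, ← ofReal_mul, mul_inv_cancel₀ (abs_ne_zero.2 hdet), ofReal_one,
    one_mul]

end GaussianQuadraticForm

theorem cpow_half_div_mul_cpow_half_mul {a b : ℝ} (ha : 0 < a) (hb : 0 < b) {μ : ℂ}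
    (hμ : 0 < μ.re) :
    ((a : ℂ) / μ) ^ (1 / 2 : ℂ) * ((b : ℂ) * μ) ^ (1 / 2 : ℂ) = √(a * b) := by
  have hμ0 : μ ≠ 0 := fun h => by simp [h] at hμ
  have hre₁ : 0 < ((a : ℂ) / μ).re := by
    rw [div_eq_mul_inv, re_ofReal_mul, inv_re]
    exact mul_pos ha (div_pos hμ (normSq_pos.2 hμ0))
  have hre₂ : 0 < ((b : ℂ) * μ).re := by
    rw [re_ofReal_mul]
    exact mul_pos hb hμ
  have hprod : (a : ℂ) / μ * (b * μ) = ((a * b : ℝ) : ℂ) := by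
    push_cast
    field_simp
  rw [← mul_cpow_of_re_pos hre₁ hre₂, hprod, Real.sqrt_eq_rpow, ofReal_cpow (by positivity)]
  norm_num

theorem cpow_half_mul_cpow_half_eq_two_pi_mul {ℏ : ℝ} (hℏ : 0 < ℏ) {μ : ℂ} (hμ : 0 < μ.re) :
    (π / (1 / (4 * (ℏ : ℂ)) * μ)) ^ (1 / 2 : ℂ) * (π / (1 / (ℏ : ℂ) * μ⁻¹)) ^ (1 / 2 : ℂ) =
      ((2 * π * ℏ : ℝ) : ℂ) := by
  have hμ0 : μ ≠ 0 := fun h => by simp [h] at hμ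
  have h₁ : π / (1 / (4 * (ℏ : ℂ)) * μ) = ((4 * π * ℏ : ℝ) : ℂ) / μ := by
    push_cast
    field_simp
  have h₂ : π / (1 / (ℏ : ℂ) * μ⁻¹) = ((π * ℏ : ℝ) : ℂ) * μ := by
    push_cast
    field_simp
  rw [h₁, h₂, cpow_half_div_mul_cpow_half_mul (by positivity) (by positivity) hμ,
    show 4 * π * ℏ * (π * ℏ) = (2 * π * ℏ) ^ 2 by ring, Real.sqrt_sq (by positivity)]

/-- `∫ δ*(u-x) d̄x = 1`.  For symmetric `M` with positive-definite real part,
both normalized Gaussian integrals converge absolutely and their product is `1`. -/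
theorem stmt4 {n : ℕ} (ℏ : ℝ) (hℏ : 0 < ℏ)
    (M : Matrix (Fin n) (Fin n) ℂ) (hsymm : M.IsSymm)
    (hpos : ∀ ξ : Fin n → ℝ, ξ ≠ 0 → 0 < ∑ i, ∑ j, ξ i * (M i j).re * ξ j)
    (u : Fin n → ℂ) :
    Integrable (fun ξ : Fin n → ℝ =>
        Complex.exp (-(1 / (4 * (ℏ : ℂ))) * bil M (cvec ξ) (cvec ξ))) volume ∧
    Integrable (fun x : Fin n → ℝ =>
        Complex.exp (-(1 / (ℏ : ℂ)) * bil M⁻¹ (u - cvec x) (u - cvec x))) volume ∧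
    ((((Real.sqrt (2 * Real.pi * ℏ))⁻¹ ^ n : ℝ) : ℂ) *
        ∫ ξ : Fin n → ℝ,
          Complex.exp (-(1 / (4 * (ℏ : ℂ))) * bil M (cvec ξ) (cvec ξ))) *
      ((((Real.sqrt (2 * Real.pi * ℏ))⁻¹ ^ n : ℝ) : ℂ) *
        ∫ x : Fin n → ℝ,
          Complex.exp (-(1 / (ℏ : ℂ)) * bil M⁻¹ (u - cvec x) (u - cvec x)))
      = 1 := by
  obtain ⟨P, d, hP, hPM⟩ := hsymm.exists_transpose_mul_mul_eq_diagonal (hsymm.posDef_map_re hpos)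
  set μ : Fin n → ℂ := fun i => 1 + d i * I
  have hμ : ∀ i, 0 < (μ i).re := by simp [μ]
  have hP' : IsUnit P⁻¹ᵀ := (isUnit_transpose _).2 (isUnit_nonsing_inv_iff.2 hP)
  have hPM' := transpose_mul_inv_mul_eq_diagonal_inv (fun i h => by simpa [h] using hμ i) hPM
  have hs₁ : ∀ i, 0 < (1 / (4 * (ℏ : ℂ)) * μ i).re := fun i => by simp [μ]; positivity
  have hs₂ : ∀ i, 0 < (1 / (ℏ : ℂ) * (μ i)⁻¹).re := fun i => by
    simp [μ, normSq_apply, ← sq]; positivity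
  have hI₁ := integrable_cexp_neg_mul_bil hP hPM hs₁ 0
  have hJ₁ := integral_cexp_neg_mul_bil hP hPM hs₁ 0
  simp only [zero_sub, bil_neg_neg] at hI₁ hJ₁
  refine ⟨hI₁, integrable_cexp_neg_mul_bil hP' hPM' hs₂ u, ?_⟩
  rw [hJ₁, integral_cexp_neg_mul_bil hP' hPM' hs₂ u]
  have hdet : |P.det| * |P⁻¹ᵀ.det| = 1 := by
    rw [← abs_mul, det_transpose, ← det_mul, mul_nonsing_inv _ ((isUnit_iff_isUnit_det P).1 hP),
      det_one, abs_one]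
  have hnorm : (√(2 * π * ℏ))⁻¹ ^ n * (√(2 * π * ℏ))⁻¹ ^ n * (2 * π * ℏ) ^ n = 1 := by
    rw [← mul_pow, ← mul_pow, ← mul_inv, Real.mul_self_sqrt (by positivity),
      inv_mul_cancel₀ (by positivity), one_pow]
  calc _ = (((√(2 * π * ℏ))⁻¹ ^ n * (√(2 * π * ℏ))⁻¹ ^ n * (|P.det| * |P⁻¹ᵀ.det|) : ℝ) : ℂ) *
        ∏ i, (π / (1 / (4 * (ℏ : ℂ)) * μ i)) ^ (1 / 2 : ℂ) *
          (π / (1 / (ℏ : ℂ) * (μ i)⁻¹)) ^ (1 / 2 : ℂ) := by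
        rw [Finset.prod_mul_distrib]
        push_cast
        ring
    _ = 1 := by
        simp only [cpow_half_mul_cpow_half_eq_two_pi_mul hℏ (hμ _), Finset.prod_const,
          Finset.card_univ, Fintype.card_fin, hdet, mul_one]
        exact_mod_cast hnorm

end
end

section
/- Fix n ∈ ℕ, ħ > 0, a matrix Λ ∈ Mat_n(ℂ) and vectors a, b ∈ ℂⁿ, and let f(u) = exp(⟨a,u⟩/(iħ)), g(u) = exp(⟨b,u⟩/(iħ)) on ℂⁿ. Then for every k ≥ 0 and u ∈ ℂⁿ: (iħ)^k/(k! 2^k) · Σ_{i₁,j₁,…,i_k,j_k=1}^n Λ_{i₁j₁}⋯Λ_{i_kj_k} (∂_{i₁}⋯∂_{i_k} f)(u) (∂_{j₁}⋯∂_{j_k} g)(u) = (1/k!) ((1/(2iħ)) aΛbᵀ)^k f(u) g(u), and the series over k converges to exp((1/(2iħ)) aΛbᵀ) f(u) g(u). Consequently, if K ∈ Mat_n(ℂ) is symmetric, J ∈ Mat_n(ℂ) is skew-symmetric, and Λ = K + J, then the K-ordered exponentials E_K(a,u) := exp((1/(4iħ)) aKaᵀ + (1/(iħ))⟨a,u⟩)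 satisfy the exponential law E_K(a,·) *_K E_K(b,·) = exp((1/(2iħ)) aJbᵀ) · E_K(a+b,·), where *_K denotes the above series product. -/
/-!
Each `∂ᵢ` acts on `u ↦ exp (c ⟨a,u⟩)` as multiplication by `c aᵢ`, so every summand of the
`k`-th term is a product over `t < k` of `c a_{ιₜ} Λ_{ιₜκₜ} c b_{κₜ}` times `f g`; summing over the
multi-indices `ι, κ` factors this into `(c² aΛbᵀ)ᵏ f g`. With `c = 1/(iℏ)` the prefactor
`(iℏ)ᵏ/(k! 2ᵏ)` turns it into `(aΛbᵀ/(2iℏ))ᵏ/k! · f g`, the `k`-th term of an exponential series.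
For `E_K`, the constants `exp (aKaᵀ/(4iℏ))`, `exp (bKbᵀ/(4iℏ))` just ride along, and for symmetric `K`
the cross term `aKbᵀ/(2iℏ)` combines with them into `exp ((a+b)K(a+b)ᵀ/(4iℏ))`.
-/

noncomputable section

/-- The pairing `⟨a,b⟩ = ∑ᵢ aᵢ bᵢ` (no conjugation). -/
def dotc {n : ℕ} (a b : Fin n → ℂ) : ℂ := ∑ i, a i * b i

/-- The partial derivative `∂ᵢ` of a function on ℂⁿ. -/
def pd {n : ℕ} (i : Fin n) (f : (Fin n → ℂ) → ℂ) : (Fin n → ℂ) → ℂ :=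
  fun u => fderiv ℂ f u (Pi.single i 1)

/-- Iterated partial derivatives `∂_{i₁} ⋯ ∂_{i_k}` along a list of indices. -/
def pds {n : ℕ} : List (Fin n) → ((Fin n → ℂ) → ℂ) → ((Fin n → ℂ) → ℂ)
  | [], f => f
  | i :: l, f => pd i (pds l f)

/-- The `k`-th term of the K-ordered star-product series
`(iℏ)^k/(k!2^k) Σ Λ_{i₁j₁}⋯Λ_{i_kj_k} (∂_{i₁}⋯∂_{i_k} f)(∂_{j₁}⋯∂_{j_k} g)`. -/
def starTerm {n : ℕ} (ℏ : ℝ) (Λ : Matrix (Fin n) (Fin n) ℂ)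
    (f g : (Fin n → ℂ) → ℂ) (k : ℕ) (u : Fin n → ℂ) : ℂ :=
  ((Complex.I * ℏ) ^ k / ((k.factorial : ℂ) * 2 ^ k)) *
    ∑ ι : Fin k → Fin n, ∑ κ : Fin k → Fin n,
      (∏ t, Λ (ι t) (κ t)) * pds (List.ofFn ι) f u * pds (List.ofFn κ) g u

/-- The K-ordered exponential `E_K(a,u) = exp((1/(4iℏ)) aKaᵀ + (1/(iℏ))⟨a,u⟩)`. -/
def Eexp {n : ℕ} (ℏ : ℝ) (K : Matrix (Fin n) (Fin n) ℂ) (a : Fin n → ℂ)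
    (u : Fin n → ℂ) : ℂ :=
  Complex.exp ((1 / (4 * Complex.I * ℏ)) * bil K a a + (1 / (Complex.I * ℏ)) * dotc a u)

open Complex

namespace StarExp

variable {n : ℕ}

lemma dotc_add_left (a b u : Fin n → ℂ) : dotc (a + b) u = dotc a u + dotc b u := by
  simp only [dotc, Pi.add_apply, add_mul, Finset.sum_add_distrib]

lemma hasFDerivAt_dotc (a u : Fin n → ℂ) :
    HasFDerivAt (dotc a) (∑ i, a i • ContinuousLinearMap.proj (R := ℂ) (φ := fun _ => ℂ) i) u := by
  convert ContinuousLinearMap.hasFDerivAt _ using 1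
  ext x
  simp [dotc]

lemma pd_const_mul_exp (c C : ℂ) (a : Fin n → ℂ) (i : Fin n) :
    pd i (fun u => C * exp (c * dotc a u)) = fun u => C * (c * a i) * exp (c * dotc a u) := by
  funext u
  have h := (((hasFDerivAt_dotc a u).const_mul c).cexp).const_mul C
  rw [pd, h.fderiv]
  simp only [smul_apply, sum_apply,
    ContinuousLinearMap.proj_apply, Pi.single_apply, smul_eq_mul, mul_ite, mul_one, mul_zero,
    Finset.sum_ite_eq', Finset.mem_univ, if_true]
  ring

lemma pds_const_mul_exp (c C : ℂ) (a : Fin n → ℂ) (l : List (Fin n)) :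
    pds l (fun u => C * exp (c * dotc a u))
      = fun u => C * (l.map fun i => c * a i).prod * exp (c * dotc a u) := by
  induction l with
  | nil => simp [pds]
  | cons i l ih =>
    rw [pds, ih, pd_const_mul_exp]
    funext u
    simp only [List.map_cons, List.prod_cons]
    ring

lemma bil_add_matrix (K J : Matrix (Fin n) (Fin n) ℂ) (a b : Fin n → ℂ) :
    bil (K + J) a b = bil K a b + bil J a b := by
  simp only [bil, Matrix.add_apply, mul_add, add_mul, Finset.sum_add_distrib]

lemma bil_add_left (K : Matrix (Fin n) (Fin n) ℂ) (a a' b : Fin n → ℂ) :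
    bil K (a + a') b = bil K a b + bil K a' b := by
  simp only [bil, Pi.add_apply, add_mul, Finset.sum_add_distrib]

lemma bil_add_right (K : Matrix (Fin n) (Fin n) ℂ) (a b b' : Fin n → ℂ) :
    bil K a (b + b') = bil K a b + bil K a b' := by
  simp only [bil, Pi.add_apply, mul_add, Finset.sum_add_distrib]

lemma bil_smul_smul (K : Matrix (Fin n) (Fin n) ℂ) (c : ℂ) (a b : Fin n → ℂ) :
    bil K (c • a) (c • b) = c ^ 2 * bil K a b := by
  simp only [bil, Pi.smul_apply, smul_eq_mul, Finset.mul_sum]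
  exact Finset.sum_congr rfl fun i _ => Finset.sum_congr rfl fun j _ => by ring

lemma bil_comm_of_isSymm {K : Matrix (Fin n) (Fin n) ℂ} (hK : K.IsSymm) (a b : Fin n → ℂ) :
    bil K b a = bil K a b := by
  rw [bil, bil, Finset.sum_comm]
  exact Finset.sum_congr rfl fun i _ => Finset.sum_congr rfl fun j _ => by
    rw [hK.apply i j]; ring

lemma bil_add_add_of_isSymm {K : Matrix (Fin n) (Fin n) ℂ} (hK : K.IsSymm) (a b : Fin n → ℂ) :
    bil K (a + b) (a + b) = bil K a a + 2 * bil K a b + bil K b b := by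
  rw [bil_add_left, bil_add_right, bil_add_right, bil_comm_of_isSymm hK b a]
  ring

lemma sum_sum_prod_eq_pow {R α : Type*} [CommSemiring R] [Fintype α] (k : ℕ) (w : α → α → R) :
    ∑ ι : Fin k → α, ∑ κ : Fin k → α, ∏ t, w (ι t) (κ t) = (∑ i, ∑ j, w i j) ^ k := by
  rw [Fintype.sum_pow]
  exact Finset.sum_congr rfl fun ι _ => (Fintype.prod_sum fun t j => w (ι t) j).symm

lemma starTerm_const_mul_exp (ℏ : ℝ) (Λ : Matrix (Fin n) (Fin n) ℂ) (a b : Fin n → ℂ)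
    (C D : ℂ) (k : ℕ) (u : Fin n → ℂ) :
    starTerm ℏ Λ (fun u => C * exp (1 / (I * ℏ) * dotc a u))
        (fun u => D * exp (1 / (I * ℏ) * dotc b u)) k u
      = 1 / (k.factorial : ℂ) * (1 / (2 * I * ℏ) * bil Λ a b) ^ k
          * (C * exp (1 / (I * ℏ) * dotc a u)) * (D * exp (1 / (I * ℏ) * dotc b u)) := by
  set c : ℂ := 1 / (I * ℏ) with hc
  set d : ℂ := 1 / (2 * I * ℏ) with hd
  set F := C * exp (c * dotc a u)
  set G := D * exp (c * dotc b u)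
  have hsummand (ι κ : Fin k → Fin n) :
      (∏ t, Λ (ι t) (κ t)) * pds (List.ofFn ι) (fun u => C * exp (c * dotc a u)) u
          * pds (List.ofFn κ) (fun u => D * exp (c * dotc b u)) u
        = F * G * ∏ t, (c • a) (ι t) * Λ (ι t) (κ t) * (c • b) (κ t) := by
    rw [pds_const_mul_exp, pds_const_mul_exp]
    simp only [List.map_ofFn, List.prod_ofFn, Function.comp_def, Pi.smul_apply, smul_eq_mul,
      Finset.prod_mul_distrib]
    ring
  have hcoeff : I * ℏ * c ^ 2 = 2 * d := by
    rcases eq_or_ne (I * ℏ) 0 with h | h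
    · simp [hc, hd, h, mul_assoc]
    · rw [hc, hd]; field_simp
  rw [starTerm]
  simp_rw [hsummand, ← Finset.mul_sum]
  have hbil : ∑ i, ∑ j, (c • a) i * Λ i j * (c • b) j = c ^ 2 * bil Λ a b := bil_smul_smul ..
  rw [sum_sum_prod_eq_pow k fun i j => (c • a) i * Λ i j * (c • b) j, hbil]
  calc (I * ℏ) ^ k / (k.factorial * 2 ^ k) * (F * G * (c ^ 2 * bil Λ a b) ^ k)
      = (I * ℏ * c ^ 2 * bil Λ a b) ^ k / (k.factorial * 2 ^ k) * F * G := by ring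
    _ = 1 / k.factorial * (d * bil Λ a b) ^ k * F * G := by
      rw [hcoeff, mul_assoc 2, mul_pow 2]
      field_simp

lemma hasSum_starTerm_const_mul_exp (ℏ : ℝ) (Λ : Matrix (Fin n) (Fin n) ℂ) (a b : Fin n → ℂ)
    (C D : ℂ) (u : Fin n → ℂ) :
    HasSum (fun k => starTerm ℏ Λ (fun u => C * exp (1 / (I * ℏ) * dotc a u))
        (fun u => D * exp (1 / (I * ℏ) * dotc b u)) k u)
      (exp (1 / (2 * I * ℏ) * bil Λ a b)
        * (C * exp (1 / (I * ℏ) * dotc a u)) * (D * exp (1 / (I * ℏ) * dotc b u))) := by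
  have hterms : (fun k => starTerm ℏ Λ (fun u => C * exp (1 / (I * ℏ) * dotc a u))
      (fun u => D * exp (1 / (I * ℏ) * dotc b u)) k u)
      = fun k => (1 / (2 * I * ℏ) * bil Λ a b) ^ k / k.factorial
          * ((C * exp (1 / (I * ℏ) * dotc a u)) * (D * exp (1 / (I * ℏ) * dotc b u))) := by
    funext k
    rw [starTerm_const_mul_exp]
    ring
  have h := (NormedSpace.expSeries_div_hasSum_exp (1 / (2 * I * ℏ) * bil Λ a b)).mul_right
    ((C * exp (1 / (I * ℏ) * dotc a u)) * (D * exp (1 / (I * ℏ) * dotc b u)))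
  rw [← exp_eq_exp_ℂ] at h
  rw [hterms, mul_assoc (exp _)]
  exact h

lemma Eexp_eq_const_mul_exp (ℏ : ℝ) (K : Matrix (Fin n) (Fin n) ℂ) (a : Fin n → ℂ) :
    Eexp ℏ K a
      = fun u => exp (1 / (4 * I * ℏ) * bil K a a) * exp (1 / (I * ℏ) * dotc a u) := by
  funext u
  rw [Eexp, exp_add]

end StarExp

open StarExp in
theorem stmt6_general {n : ℕ} (ℏ : ℝ)
    (Λ : Matrix (Fin n) (Fin n) ℂ) (a b : Fin n → ℂ)
    (f g : (Fin n → ℂ) → ℂ)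
    (hf : f = fun u => Complex.exp ((1 / (Complex.I * ℏ)) * dotc a u))
    (hg : g = fun u => Complex.exp ((1 / (Complex.I * ℏ)) * dotc b u)) :
    (∀ (k : ℕ) (u : Fin n → ℂ),
      starTerm ℏ Λ f g k u
        = (1 / (k.factorial : ℂ)) * ((1 / (2 * Complex.I * ℏ)) * bil Λ a b) ^ k
            * f u * g u) ∧
    (∀ u : Fin n → ℂ,
      HasSum (fun k : ℕ => starTerm ℏ Λ f g k u)
        (Complex.exp ((1 / (2 * Complex.I * ℏ)) * bil Λ a b) * f u * g u)) ∧
    (∀ K J : Matrix (Fin n) (Fin n) ℂ, K.IsSymm → J.transpose = -J → Λ = K + J →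
      ∀ u : Fin n → ℂ,
        HasSum (fun k : ℕ => starTerm ℏ Λ (Eexp ℏ K a) (Eexp ℏ K b) k u)
          (Complex.exp ((1 / (2 * Complex.I * ℏ)) * bil J a b) * Eexp ℏ K (a + b) u)) := by
  have hf₁ : f = fun u => 1 * exp (1 / (I * ℏ) * dotc a u) := by simp only [hf, one_mul]
  have hg₁ : g = fun u => 1 * exp (1 / (I * ℏ) * dotc b u) := by simp only [hg, one_mul]
  refine ⟨fun k u => ?_, fun u => ?_, fun K J hK _ hΛ u => ?_⟩
  · rw [hf₁, hg₁, starTerm_const_mul_exp]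
  · rw [hf₁, hg₁]
    exact hasSum_starTerm_const_mul_exp ℏ Λ a b 1 1 u
  · rw [Eexp_eq_const_mul_exp, Eexp_eq_const_mul_exp]
    convert hasSum_starTerm_const_mul_exp ℏ Λ a b _ _ u using 1
    simp only [Eexp, ← exp_add]
    rw [hΛ, bil_add_matrix, bil_add_add_of_isSymm hK, dotc_add_left]
    congr 1
    ring

/-- the star-product series of two exponentials of linear forms: the `k`-th
term collapses to `(1/k!)((1/(2iℏ)) aΛbᵀ)^k f g`, the series converges to
`exp((1/(2iℏ)) aΛbᵀ) f g`, and consequently the K-ordered exponentials obey the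
exponential law `E_K(a,·) *_K E_K(b,·) = exp((1/(2iℏ)) aJbᵀ) E_K(a+b,·)`. -/
theorem stmt6 {n : ℕ} (ℏ : ℝ) (hℏ : 0 < ℏ)
    (Λ : Matrix (Fin n) (Fin n) ℂ) (a b : Fin n → ℂ)
    (f g : (Fin n → ℂ) → ℂ)
    (hf : f = fun u => Complex.exp ((1 / (Complex.I * ℏ)) * dotc a u))
    (hg : g = fun u => Complex.exp ((1 / (Complex.I * ℏ)) * dotc b u)) :
    (∀ (k : ℕ) (u : Fin n → ℂ),
      starTerm ℏ Λ f g k u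
        = (1 / (k.factorial : ℂ)) * ((1 / (2 * Complex.I * ℏ)) * bil Λ a b) ^ k
            * f u * g u) ∧
    (∀ u : Fin n → ℂ,
      HasSum (fun k : ℕ => starTerm ℏ Λ f g k u)
        (Complex.exp ((1 / (2 * Complex.I * ℏ)) * bil Λ a b) * f u * g u)) ∧
    (∀ K J : Matrix (Fin n) (Fin n) ℂ, K.IsSymm → J.transpose = -J → Λ = K + J →
      ∀ u : Fin n → ℂ,
        HasSum (fun k : ℕ => starTerm ℏ Λ (Eexp ℏ K a) (Eexp ℏ K b) k u)
          (Complex.exp ((1 / (2 * Complex.I * ℏ)) * bil J a b) * Eexp ℏ K (a + b) u)) :=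
  stmt6_general ℏ Λ a b f g hf hg

end
end

section
/- Fix n ∈ ℕ, ħ > 0, a ∈ ℂⁿ and Λ ∈ Mat_n(ℂ), and let f : ℂⁿ → ℂ be entire. Then for every u ∈ ℂⁿ the series Σ_{k≥0} (1/(k! 2^k)) Σ_{j₁,…,j_k=1}^n (aΛ)_{j₁}⋯(aΛ)_{j_k} (∂_{j₁}⋯∂_{j_k} f)(u), where (aΛ)_j = Σᵢ aᵢΛᵢⱼ, converges to f(u + (1/2) aΛ). Consequently, for Λ = K + J (K symmetric, J skew-symmetric), the star product of the exponential with f satisfies exp(⟨a,u⟩/(iħ)) *_K f(u) = exp(⟨a,u⟩/(iħ)) · f(u + (1/2) a(K+J)), since the k-th series term of the star product equals (iħ)^k/(k!2^k) ΣΛ⋯(∂^k e^{⟨a,·⟩/(iħ)})(∂^k f) = e^{⟨a,u⟩/(iħ)} · (1/(k!2^k)) Σ (aΛ)_{j₁}⋯(aΛ)_{j_k} ∂_{j₁}⋯∂_{j_k} f(u). -/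
/-!
Restricted to a complex line `w ↦ u + w • c`, an entire `f` on `ℂⁿ` becomes an entire function of
one variable whose `k`-th derivative at `0` is `∑ᵥ (∏ₜ c_{vₜ}) ∂_{v₁}⋯∂_{v_k} f(u)`: this is the
chain rule, which applies because partial derivatives of entire functions are again entire (Cauchy's
formula on the line, differentiated under the integral sign with the Cauchy estimate as dominating
bound). Evaluating the Taylor series of the restriction at `1` gives the translation series.
For the star product, each derivative of `exp(⟨a,·⟩/(iℏ))` multiplies it by `aᵢ/(iℏ)`, the powers of
`iℏ` cancel, and the sum over the left indices of `∏ₜ a_{ιₜ} Λ_{ιₜκₜ}` is `∏ₜ (aΛ)_{κₜ}`.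
-/

noncomputable section

open Metric Complex MeasureTheory Real

section LineRestriction

variable {E F : Type*} [NormedAddCommGroup E] [NormedSpace ℂ E]
  [NormedAddCommGroup F] [NormedSpace ℂ F] {f : E → F}

theorem Differentiable.hasDerivAt_comp_add_smul (hf : Differentiable ℂ f) (u b : E) (z : ℂ) :
    HasDerivAt (fun w : ℂ => f (u + w • b)) (fderiv ℂ f (u + z • b) b) z := by
  have hline : HasDerivAt (fun w : ℂ => u + w • b) b z := by
    simpa using ((hasDerivAt_id z).smul_const b).const_add u
  exact (hf _).hasFDerivAt.comp_hasDerivAt z hline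

theorem Differentiable.comp_add_smul (hf : Differentiable ℂ f) (u b : E) :
    Differentiable ℂ (fun w : ℂ => f (u + w • b)) :=
  fun z => (hf.hasDerivAt_comp_add_smul u b z).differentiableAt

theorem Differentiable.norm_fderiv_le (hf : Differentiable ℂ f) {u : E} {C : ℝ}
    (hC : ∀ y ∈ closedBall u 1, ‖f y‖ ≤ C) : ‖fderiv ℂ f u‖ ≤ C := by
  have hC0 : 0 ≤ C := (norm_nonneg _).trans (hC u (mem_closedBall_self zero_le_one))
  refine ContinuousLinearMap.opNorm_le_bound _ hC0 fun b => ?_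
  rcases eq_or_ne b 0 with rfl | hb
  · simp
  have hb' : 0 < ‖b‖ := norm_pos_iff.2 hb
  have hsphere : ∀ z ∈ sphere (0 : ℂ) ‖b‖⁻¹, ‖f (u + z • b)‖ ≤ C := fun z hz => by
    refine hC _ ?_
    rw [mem_closedBall, dist_self_add_left, norm_smul, mem_sphere_zero_iff_norm.1 hz,
      inv_mul_cancel₀ hb'.ne']
  have hcauchy := norm_deriv_le_of_forall_mem_sphere_norm_le (inv_pos.2 hb')
    (hf.comp_add_smul u b).diffContOnCl hsphere
  rw [(hf.hasDerivAt_comp_add_smul u b 0).deriv, zero_smul, add_zero, div_inv_eq_mul] at hcauchy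
  exact hcauchy

theorem Differentiable.exists_bound_norm_fderiv [ProperSpace E] (hf : Differentiable ℂ f)
    (u₀ : E) (r : ℝ) : ∃ M, ∀ u ∈ closedBall u₀ r, ‖fderiv ℂ f u‖ ≤ M := by
  obtain ⟨C, hC⟩ := (isCompact_closedBall u₀ (r + 1)).exists_bound_of_continuousOn
    hf.continuous.continuousOn
  refine ⟨C, fun u hu => hf.norm_fderiv_le fun y hy => hC y ?_⟩
  rw [mem_closedBall] at hu hy ⊢
  linarith [dist_triangle y u u₀]

theorem Differentiable.fderiv_apply_eq_circleIntegral [CompleteSpace F] (hf : Differentiable ℂ f)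
    (u b : E) : fderiv ℂ f u b = (2 * π * I)⁻¹ • ∮ z in C(0, 1), (z ^ 2)⁻¹ • f (u + z • b) := by
  have hcauchy := (hf.comp_add_smul u b).diffContOnCl.deriv_eq_smul_circleIntegral
    (c := 0) one_pos
  rw [(hf.hasDerivAt_comp_add_smul u b 0).deriv, zero_smul, add_zero] at hcauchy
  simp only [sub_zero, one_div] at hcauchy
  rw [hcauchy, smul_smul, inv_mul_cancel₀ two_pi_I_ne_zero, one_smul]

end LineRestriction

section CauchyIntegral
variable {E : Type*} [NormedAddCommGroup E] [NormedSpace ℂ E]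

theorem differentiable_circleIntegral_comp_add_smul [FiniteDimensional ℂ E]
    {f : E → ℂ} (hf : Differentiable ℂ f) {g : ℂ → ℂ} (hg : ContinuousOn g (sphere 0 1))
    (b : E) : Differentiable ℂ (fun u => ∮ z in C(0, 1), g z • f (u + z • b)) := by
  simp only [circleIntegral, deriv_circleMap, smul_smul]
  intro u₀
  borelize E
  obtain ⟨M, hM⟩ := hf.exists_bound_norm_fderiv u₀ (1 + ‖b‖)
  set w : ℝ → ℂ := fun θ => circleMap 0 1 θ * I * g (circleMap 0 1 θ)
  have hw : Continuous w := ((continuous_circleMap 0 1).mul continuous_const).mul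
      (hg.comp_continuous (continuous_circleMap 0 1) (circleMap_mem_sphere 0 zero_le_one))
  have hline : ∀ u, Continuous fun θ => u + circleMap 0 1 θ • b := fun u => by fun_prop
  have hmem : ∀ u ∈ ball u₀ 1, ∀ θ, u + circleMap 0 1 θ • b ∈ closedBall u₀ (1 + ‖b‖) := by
    intro u hu θ
    rw [mem_ball] at hu
    rw [mem_closedBall]
    have : dist (u + circleMap 0 1 θ • b) u = ‖b‖ := by
      rw [dist_self_add_left, norm_smul, norm_circleMap_zero, abs_one, one_mul]
    linarith [dist_triangle (u + circleMap 0 1 θ • b) u u₀]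
  have hderiv := intervalIntegral.hasFDerivAt_integral_of_dominated_of_fderiv_le
    (F := fun u θ => w θ • f (u + circleMap 0 1 θ • b))
    (F' := fun u θ => w θ • fderiv ℂ f (u + circleMap 0 1 θ • b))
    (bound := fun θ => ‖w θ‖ * M) (μ := volume) (a := 0) (b := 2 * π)
    (ball_mem_nhds u₀ one_pos)
    (Filter.Eventually.of_forall fun u =>
      (hw.smul (hf.continuous.comp (hline u))).aestronglyMeasurable)
    ((hw.smul (hf.continuous.comp (hline u₀))).intervalIntegrable _ _)
    (hw.aestronglyMeasurable.smul
      ((measurable_fderiv ℂ f).comp (hline u₀).measurable).aestronglyMeasurable)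
    (ae_of_all _ fun θ _ u hu => by
      rw [norm_smul]
      exact mul_le_mul_of_nonneg_left (hM _ (hmem u hu θ)) (norm_nonneg _))
    ((hw.norm.mul continuous_const).intervalIntegrable _ _)
    (ae_of_all _ fun θ _ u _ => by
      have := (hf _).hasFDerivAt.comp u ((hasFDerivAt_id u).add_const (circleMap 0 1 θ • b))
      exact this.const_smul (w θ))
  exact hderiv.differentiableAt

theorem Differentiable.differentiable_fderiv_apply [FiniteDimensional ℂ E] {f : E → ℂ}
    (hf : Differentiable ℂ f) (b : E) : Differentiable ℂ (fun u => fderiv ℂ f u b) := by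
  simp_rw [hf.fderiv_apply_eq_circleIntegral]
  refine (differentiable_circleIntegral_comp_add_smul hf ?_ b).const_smul ((2 * π * I)⁻¹ : ℂ)
  exact (continuousOn_id.pow 2).inv₀ fun z hz =>
    pow_ne_zero 2 (ne_zero_of_mem_unit_sphere ⟨z, hz⟩)

end CauchyIntegral

section PartialDerivatives
variable {n : ℕ} {f : (Fin n → ℂ) → ℂ}

theorem differentiable_pd (hf : Differentiable ℂ f) (i : Fin n) : Differentiable ℂ (pd i f) :=
  hf.differentiable_fderiv_apply _

theorem differentiable_pds (hf : Differentiable ℂ f) :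
    ∀ l : List (Fin n), Differentiable ℂ (pds l f)
  | [] => hf
  | i :: l => differentiable_pd (differentiable_pds hf l) i

theorem fderiv_apply_eq_sum_pd (u c : Fin n → ℂ) :
    fderiv ℂ f u c = ∑ j, c j * pd j f u := by
  conv_lhs => rw [← Finset.univ_sum_single c]
  simp only [map_sum, pd]
  refine Finset.sum_congr rfl fun j _ => ?_
  rw [← smul_eq_mul, ← map_smul, ← Pi.single_smul, smul_eq_mul, mul_one]

theorem iteratedDeriv_comp_add_smul_eq_sum_pds (hf : Differentiable ℂ f) (u c : Fin n → ℂ)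
    (k : ℕ) : iteratedDeriv k (fun w : ℂ => f (u + w • c)) =
      fun z => ∑ v : Fin k → Fin n, (∏ t, c (v t)) * pds (List.ofFn v) f (u + z • c) := by
  induction k with
  | zero => funext z; simp [pds]
  | succ k ih =>
    funext z
    rw [iteratedDeriv_succ, ih]
    refine (HasDerivAt.fun_sum fun v _ =>
      ((differentiable_pds hf _).hasDerivAt_comp_add_smul u c z).const_mul _).deriv.trans ?_
    simp only [fderiv_apply_eq_sum_pd, Finset.mul_sum]
    rw [← (Fin.consEquiv fun _ => Fin n).sum_comp, Fintype.sum_prod_type, Finset.sum_comm]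
    refine Finset.sum_congr rfl fun j _ => Finset.sum_congr rfl fun v _ => ?_
    simp only [Fin.consEquiv_apply, Fin.prod_univ_succ, Fin.cons_zero, Fin.cons_succ,
      List.ofFn_succ, pds]
    ring

theorem hasSum_taylorSeries_pds (hf : Differentiable ℂ f) (u c : Fin n → ℂ) :
    HasSum (fun k => (k.factorial : ℂ)⁻¹ *
        ∑ v : Fin k → Fin n, (∏ t, c (v t)) * pds (List.ofFn v) f u) (f (u + c)) := by
  have := Complex.hasSum_taylorSeries_of_entire (hf.comp_add_smul u c) 0 1
  simpa [iteratedDeriv_comp_add_smul_eq_sum_pds hf] using this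

end PartialDerivatives

section Exponential
variable {n : ℕ}

theorem pd_const_mul_exp_mul_dotc (C c : ℂ) (a : Fin n → ℂ) (i : Fin n) :
    pd i (fun w => C * exp (c * dotc a w)) = fun u => C * (c * a i) * exp (c * dotc a u) := by
  funext u
  have hdotc : HasFDerivAt (dotc a) (∑ j, a j • ContinuousLinearMap.proj j) u :=
    HasFDerivAt.fun_sum fun j _ => (hasFDerivAt_apply (𝕜 := ℂ) j u).const_mul (a j)
  rw [pd, ((hdotc.const_mul c).cexp.const_mul C).fderiv]
  simp only [smul_apply, sum_apply, ContinuousLinearMap.proj_apply, Pi.single_apply, smul_eq_mul,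
    mul_ite, mul_one, mul_zero, Finset.sum_ite_eq', Finset.mem_univ, ↓reduceIte]
  ring

theorem pds_exp_mul_dotc (c : ℂ) (a : Fin n → ℂ) (l : List (Fin n)) :
    pds l (fun w => exp (c * dotc a w)) =
      fun u => (l.map fun i => c * a i).prod * exp (c * dotc a u) := by
  induction l with
  | nil => simp [pds]
  | cons i l ih =>
    funext u
    simp only [pds, ih, pd_const_mul_exp_mul_dotc, List.map_cons, List.prod_cons]
    ring

open Matrix in
theorem starTerm_exp_mul_dotc {ℏ : ℝ} (hℏ : ℏ ≠ 0) (a : Fin n → ℂ)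
    (Λ : Matrix (Fin n) (Fin n) ℂ) (f : (Fin n → ℂ) → ℂ) (k : ℕ) (u : Fin n → ℂ) :
    starTerm ℏ Λ (fun w => exp (1 / (I * ℏ) * dotc a w)) f k u =
      exp (1 / (I * ℏ) * dotc a u) * (1 / ((k.factorial : ℂ) * 2 ^ k) *
        ∑ v : Fin k → Fin n, (∏ t, (a ᵥ* Λ) (v t)) * pds (List.ofFn v) f u) := by
  have hIℏ : I * ℏ ≠ 0 := mul_ne_zero I_ne_zero (ofReal_ne_zero.2 hℏ)
  have hpow : (I * ℏ) ^ k * (1 / (I * ℏ)) ^ k = 1 := by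
    rw [← mul_pow, mul_one_div_cancel hIℏ, one_pow]
  have hvecMul : ∀ κ : Fin k → Fin n,
      ∑ ι : Fin k → Fin n, ∏ t, a (ι t) * Λ (ι t) (κ t) = ∏ t, (a ᵥ* Λ) (κ t) := fun κ =>
    (Fintype.prod_sum fun t i => a i * Λ i (κ t)).symm
  simp only [starTerm, pds_exp_mul_dotc, List.map_ofFn, List.prod_ofFn, Function.comp_def]
  rw [Finset.sum_comm, Finset.mul_sum, Finset.mul_sum, Finset.mul_sum]
  refine Finset.sum_congr rfl fun κ _ => ?_
  rw [← hvecMul]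
  simp only [Finset.mul_sum, Finset.sum_mul]
  refine Finset.sum_congr rfl fun ι _ => ?_
  rw [Finset.prod_mul_distrib, Finset.prod_mul_distrib, Finset.prod_const, Finset.card_univ,
    Fintype.card_fin]
  linear_combination (exp (1 / (I * ℏ) * dotc a u) * (∏ t, Λ (ι t) (κ t)) * (∏ t, a (ι t)) *
    pds (List.ofFn κ) f u / ((k.factorial : ℂ) * 2 ^ k)) * hpow

end Exponential

/-- for an entire `f`, the translation series
`Σ_k (1/(k!2^k)) Σ_v (aΛ)_{v₁}⋯(aΛ)_{v_k} ∂_{v₁}⋯∂_{v_k} f(u)` converges to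
`f(u + (1/2)aΛ)`, and consequently the star product of the exponential with `f` is
`exp(⟨a,u⟩/(iℏ)) *_K f(u) = exp(⟨a,u⟩/(iℏ)) · f(u + (1/2)a(K+J))`. -/
theorem stmt7 {n : ℕ} (ℏ : ℝ) (hℏ : 0 < ℏ)
    (a : Fin n → ℂ) (Λ : Matrix (Fin n) (Fin n) ℂ)
    (f : (Fin n → ℂ) → ℂ) (hf : Differentiable ℂ f)
    (aΛ : Fin n → ℂ) (haΛ : aΛ = fun j => ∑ i, a i * Λ i j) :
    (∀ u : Fin n → ℂ,
      HasSum (fun k : ℕ =>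
          (1 / ((k.factorial : ℂ) * 2 ^ k)) *
            ∑ v : Fin k → Fin n,
              (∏ t, aΛ (v t)) * pds (List.ofFn v) f u)
        (f (u + (2⁻¹ : ℂ) • aΛ))) ∧
    (∀ K J : Matrix (Fin n) (Fin n) ℂ, K.IsSymm → J.transpose = -J → Λ = K + J →
      ∀ u : Fin n → ℂ,
        HasSum (fun k : ℕ =>
            starTerm ℏ Λ (fun w => Complex.exp ((1 / (Complex.I * ℏ)) * dotc a w)) f k u)
          (Complex.exp ((1 / (Complex.I * ℏ)) * dotc a u) * f (u + (2⁻¹ : ℂ) • aΛ))) := by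
  have htranslate : ∀ u, HasSum (fun k : ℕ => 1 / ((k.factorial : ℂ) * 2 ^ k) *
      ∑ v : Fin k → Fin n, (∏ t, aΛ (v t)) * pds (List.ofFn v) f u) (f (u + (2⁻¹ : ℂ) • aΛ)) := by
    intro u
    convert hasSum_taylorSeries_pds hf u ((2⁻¹ : ℂ) • aΛ) using 2 with k
    simp only [Pi.smul_apply, smul_eq_mul, Finset.prod_mul_distrib, Finset.prod_const,
      Finset.card_univ, Fintype.card_fin, Finset.mul_sum]
    refine Finset.sum_congr rfl fun v _ => ?_
    rw [one_div, mul_inv, inv_pow]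
    ring
  refine ⟨htranslate, fun K J _ _ _ u => ?_⟩
  obtain rfl : aΛ = Matrix.vecMul a Λ := haΛ
  simpa only [starTerm_exp_mul_dotc hℏ.ne'] using (htranslate u).mul_left _

end
end

section
/- Fix ħ > 0 and δ, δ′, c ∈ ℂ with Q := (1−c)² − δδ′ ≠ 0. For t ∈ ℝ set Δ(t) = e^t + e^{−t} − c(e^t − e^{−t}) and D(t) = Δ(t)² − (e^t − e^{−t})² δδ′. Then D(t) ≠ 0 for all sufficiently large t, and for every (u,v) ∈ ℂ² one has the limit, as t → +∞: e^{2t} · (4 / D(t)) · exp( (2/(iħ)) · ((e^t − e^{−t})/D(t)) · ( (e^t − e^{−t})(δ′u² + δv²) + 2Δ(t)uv ) ) → (4/Q) · exp( (2/(iħ)) (δ′u² + 2(1−c)uv + δv²) / Q ). (This is the square of the K-ordered expression e^t · :e_*^{t(1/(iħ)) 2ũ∘ṽ}:_K = :e_*^{t(1/(iħ)) 2ṽ*ũ}:_K converging, as t → ∞, to the square of the bar-vacuum ϖ̄₀₀; squaring removes the square-root branch ambiguity.) -/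
/-!
Put `s = e^t`. Then `Δ(t) = s · (1 + s⁻² − c(1 − s⁻²))` and `e^t − e^{−t} = s · (1 − s⁻²)`, and the
squared K-ordered expression, written as a function of the pair `(Δ, e^t − e^{−t})`, is homogeneous
of degree `−2`. Hence `e^{2t}` times it is the same expression at `(1 + s⁻² − c(1 − s⁻²), 1 − s⁻²)`,
which tends to `(1 − c, 1)`. There the discriminant `a² − b²δδ′` equals `Q ≠ 0`, so the expression
is continuous and the limit is its value at `(1 − c, 1)`.
-/

open Complex Filter Topology

theorem tendsto_cexp_neg_ofReal_atTop : Tendsto (fun t : ℝ => cexp (-t)) atTop (𝓝 0) :=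
  tendsto_exp_comap_re_atBot.comp <| tendsto_comap_iff.2 <| by
    simpa [Function.comp_def] using tendsto_neg_atTop_atBot

namespace BarVacuum

variable (ℏ : ℝ) (δ δ' u v : ℂ)

noncomputable def disc (a b : ℂ) : ℂ := a ^ 2 - b ^ 2 * (δ * δ')

/-- At `(a, b) = (Δ(t), e^t − e^{−t})` this is the square of the K-ordered expression of
`e_*^{t(1/(iħ)) 2ũ∘ṽ}` at `(u, v)`, and `disc` is `D(t)`. -/
noncomputable def symbolSq (a b : ℂ) : ℂ :=
  4 / disc δ δ' a b *
    cexp (2 / (I * ℏ) * (b / disc δ δ' a b) * (b * (δ' * u ^ 2 + δ * v ^ 2) + 2 * a * u * v))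

theorem disc_mul_mul (s a b : ℂ) : disc δ δ' (s * a) (s * b) = s ^ 2 * disc δ δ' a b := by
  unfold disc; ring

theorem sq_mul_symbolSq_mul {s : ℂ} (hs : s ≠ 0) (a b : ℂ) :
    s ^ 2 * symbolSq ℏ δ δ' u v (s * a) (s * b) = symbolSq ℏ δ δ' u v a b := by
  have hs2 : s ^ 2 ≠ 0 := pow_ne_zero 2 hs
  have harg : s * b / (s ^ 2 * disc δ δ' a b) *
        (s * b * (δ' * u ^ 2 + δ * v ^ 2) + 2 * (s * a) * u * v) =
      b / disc δ δ' a b * (b * (δ' * u ^ 2 + δ * v ^ 2) + 2 * a * u * v) := by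
    rw [div_mul_eq_mul_div, div_mul_eq_mul_div, ← mul_div_mul_left (b * _) _ hs2]
    ring_nf
  rw [symbolSq, symbolSq, disc_mul_mul, mul_assoc (2 / _), harg, ← mul_assoc (2 / _),
    ← mul_assoc, mul_div_assoc', mul_div_mul_left _ _ hs2]

theorem continuousAt_symbolSq {a b : ℂ} (h : disc δ δ' a b ≠ 0) :
    ContinuousAt (fun p : ℂ × ℂ => symbolSq ℏ δ δ' u v p.1 p.2) (a, b) := by
  unfold symbolSq disc at *
  fun_prop (disch := exact h)

end BarVacuum

open BarVacuum

theorem stmt14_general (ℏ : ℝ) (δ δ' c : ℂ) (Q : ℂ)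
    (hQ : Q = (1 - c) ^ 2 - δ * δ') (hQ0 : Q ≠ 0)
    (Δ D : ℝ → ℂ)
    (hΔ : Δ = fun t : ℝ =>
      Complex.exp t + Complex.exp (-t) - c * (Complex.exp t - Complex.exp (-t)))
    (hD : D = fun t : ℝ =>
      (Δ t) ^ 2 - (Complex.exp t - Complex.exp (-t)) ^ 2 * (δ * δ')) :
    (∃ T : ℝ, ∀ t : ℝ, T ≤ t → D t ≠ 0) ∧
    ∀ u v : ℂ,
      Filter.Tendsto
        (fun t : ℝ =>
          Complex.exp (2 * (t : ℂ)) * (4 / D t) *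
            Complex.exp ((2 / (Complex.I * ℏ)) *
              ((Complex.exp t - Complex.exp (-t)) / D t) *
              ((Complex.exp t - Complex.exp (-t)) * (δ' * u ^ 2 + δ * v ^ 2)
                + 2 * Δ t * u * v)))
        Filter.atTop
        (nhds ((4 / Q) *
          Complex.exp ((2 / (Complex.I * ℏ)) *
            (δ' * u ^ 2 + 2 * (1 - c) * u * v + δ * v ^ 2) / Q))) := by
  set a : ℂ → ℂ := fun w => 1 + w ^ 2 - c * (1 - w ^ 2)
  set b : ℂ → ℂ := fun w => 1 - w ^ 2
  have hab : Tendsto (fun t : ℝ => (a (cexp (-t)), b (cexp (-t)))) atTop (𝓝 (1 - c, 1)) :=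
    ((by fun_prop : Continuous fun w => (a w, b w)).tendsto' 0 _ (by simp [a, b])).comp
      tendsto_cexp_neg_ofReal_atTop
  have hinv (t : ℝ) : cexp t * cexp (-t) = 1 := by rw [exp_neg, mul_inv_cancel₀ (exp_ne_zero _)]
  have hΔ' (t : ℝ) : Δ t = cexp t * a (cexp (-t)) := by
    rw [hΔ]; linear_combination -(1 + c) * cexp (-t) * hinv t
  have hsinh (t : ℝ) : cexp t - cexp (-t) = cexp t * b (cexp (-t)) := by
    linear_combination cexp (-t) * hinv t
  have hD' (t : ℝ) : D t = cexp t ^ 2 * disc δ δ' (a (cexp (-t))) (b (cexp (-t))) := by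
    rw [hD, ← disc_mul_mul, ← hΔ', ← hsinh]; rfl
  have hQ' : disc δ δ' (1 - c) 1 ≠ 0 := by simpa [disc, hQ] using hQ0
  refine ⟨?_, fun u v => ?_⟩
  · obtain ⟨T, hT⟩ := eventually_atTop.mp <|
      ((by unfold disc; fun_prop : Continuous fun p : ℂ × ℂ => disc δ δ' p.1 p.2).tendsto _
        |>.comp hab).eventually_ne hQ'
    exact ⟨T, fun t ht => hD' t ▸ mul_ne_zero (pow_ne_zero 2 (exp_ne_zero _)) (hT t ht)⟩
  · have hlim : symbolSq ℏ δ δ' u v (1 - c) 1 =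
        4 / Q * cexp (2 / (I * ℏ) * (δ' * u ^ 2 + 2 * (1 - c) * u * v + δ * v ^ 2) / Q) := by
      rw [symbolSq, disc, hQ]; ring_nf
    refine hlim ▸ ((continuousAt_symbolSq ℏ δ δ' u v hQ').tendsto.comp hab).congr fun t => ?_
    calc symbolSq ℏ δ δ' u v (a (cexp (-t))) (b (cexp (-t)))
        = cexp t ^ 2 * symbolSq ℏ δ δ' u v (cexp t * a (cexp (-t))) (cexp t * b (cexp (-t))) :=
          (sq_mul_symbolSq_mul ℏ δ δ' u v (exp_ne_zero _) _ _).symm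
      _ = cexp (2 * t) * symbolSq ℏ δ δ' u v (Δ t) (cexp t - cexp (-t)) := by
          rw [← hΔ', ← hsinh, ← exp_nat_mul]; push_cast; rfl
      _ = _ := by rw [hD, mul_assoc]; rfl

/-- with `Δ(t) = e^t + e^{−t} − c(e^t − e^{−t})` and
`D(t) = Δ(t)² − (e^t − e^{−t})² δδ′`, if `Q = (1−c)² − δδ′ ≠ 0` then `D(t) ≠ 0` for all
sufficiently large `t`, and as `t → +∞` the squared K-ordered expression
`e^{2t} (4/D(t)) exp((2/(iℏ)) ((e^t−e^{−t})/D(t)) ((e^t−e^{−t})(δ′u²+δv²) + 2Δ(t)uv))`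
converges to `(4/Q) exp((2/(iℏ)) (δ′u² + 2(1−c)uv + δv²)/Q)` (the square of the
bar-vacuum `ϖ̄₀₀`). -/
theorem stmt14 (ℏ : ℝ) (hℏ : 0 < ℏ) (δ δ' c : ℂ) (Q : ℂ)
    (hQ : Q = (1 - c) ^ 2 - δ * δ') (hQ0 : Q ≠ 0)
    (Δ D : ℝ → ℂ)
    (hΔ : Δ = fun t : ℝ =>
      Complex.exp t + Complex.exp (-t) - c * (Complex.exp t - Complex.exp (-t)))
    (hD : D = fun t : ℝ =>
      (Δ t) ^ 2 - (Complex.exp t - Complex.exp (-t)) ^ 2 * (δ * δ')) :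
    (∃ T : ℝ, ∀ t : ℝ, T ≤ t → D t ≠ 0) ∧
    ∀ u v : ℂ,
      Filter.Tendsto
        (fun t : ℝ =>
          Complex.exp (2 * (t : ℂ)) * (4 / D t) *
            Complex.exp ((2 / (Complex.I * ℏ)) *
              ((Complex.exp t - Complex.exp (-t)) / D t) *
              ((Complex.exp t - Complex.exp (-t)) * (δ' * u ^ 2 + δ * v ^ 2)
                + 2 * Δ t * u * v)))
        Filter.atTop
        (nhds ((4 / Q) *
          Complex.exp ((2 / (Complex.I * ℏ)) *
            (δ' * u ^ 2 + 2 * (1 - c) * u * v + δ * v ^ 2) / Q))) :=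
  stmt14_general ℏ δ δ' c Q hQ hQ0 Δ D hΔ hD
end

section
/- On ℝ⁴, with elements written x = (s, ξ₁, ξ₂, t) and y = (s′, η₁, η₂, t′), define the bracket [x, y] = (ξ₁η₂ − ξ₂η₁, tη₂ − t′ξ₂, −tη₁ + t′ξ₁, 0) and the symmetric bilinear form ⟨x, y⟩ = st′ + ts′ − ξ₁η₁ − ξ₂η₂. Then: (a) the bracket is bilinear, alternating, and satisfies the Jacobi identity, so it makes ℝ⁴ a real Lie algebra; (b) the form is adjoint-invariant: ⟨[x,y], z⟩ + ⟨y, [x,z]⟩ = 0 for all x, y, z ∈ ℝ⁴; (c) the form is nondegenerate of Lorentz signature (1,3) (one positive and three negative squares), so this Lie algebra is a Minkowski space with invariant Lorentz metric. -/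
/-!
The Lie algebra axioms, the invariance and the symmetry and linearity of the form are
polynomial identities in the coordinates. The form is nondegenerate because pairing with the
standard basis vectors recovers every coordinate of `x` up to sign. For the signature, the
light-cone coordinates give the frame `(e₀ + e₃)/√2, e₁, e₂, (e₀ − e₃)/√2`, which is
orthonormal of type `(1, 3)`; an orthogonal family of non-isotropic vectors is linearly
independent.
-/

noncomputable section

/-- The bracket of the Lie algebra `E₀` on ℝ⁴, written in coordinates
`x = (s, ξ₁, ξ₂, t)`. -/
def br (x y : Fin 4 → ℝ) : Fin 4 → ℝ :=
  ![x 1 * y 2 - x 2 * y 1,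
    x 3 * y 2 - y 3 * x 2,
    -(x 3 * y 1) + y 3 * x 1,
    0]

/-- The Lorentz bilinear form `⟨x,y⟩ = st′ + ts′ − ξ₁η₁ − ξ₂η₂` on ℝ⁴. -/
def lform (x y : Fin 4 → ℝ) : ℝ :=
  x 0 * y 3 + x 3 * y 0 - x 1 * y 1 - x 2 * y 2

theorem br_smul_add_left (a : ℝ) (x x' y : Fin 4 → ℝ) :
    br (a • x + x') y = a • br x y + br x' y := by
  ext i; fin_cases i <;> simp [br] <;> ring

theorem br_smul_add_right (a : ℝ) (x y y' : Fin 4 → ℝ) :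
    br x (a • y + y') = a • br x y + br x y' := by
  ext i; fin_cases i <;> simp [br] <;> ring

theorem br_self (x : Fin 4 → ℝ) : br x x = 0 := by
  ext i; fin_cases i <;> simp [br, mul_comm]

theorem br_jacobi (x y z : Fin 4 → ℝ) :
    br x (br y z) + br y (br z x) + br z (br x y) = 0 := by
  ext i; fin_cases i <;> simp [br] <;> ring

theorem lform_br_add_lform_br (x y z : Fin 4 → ℝ) :
    lform (br x y) z + lform y (br x z) = 0 := by
  simp [br, lform]; ring

theorem lform_comm (x y : Fin 4 → ℝ) : lform x y = lform y x := by
  unfold lform; ring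

theorem lform_smul_add_left (a : ℝ) (x x' y : Fin 4 → ℝ) :
    lform (a • x + x') y = a * lform x y + lform x' y := by
  simp [lform]; ring

theorem eq_zero_of_forall_lform_eq_zero (x : Fin 4 → ℝ) (h : ∀ y, lform x y = 0) : x = 0 := by
  have h0 := h ![0, 0, 0, 1]
  have h1 := h ![0, 1, 0, 0]
  have h2 := h ![0, 0, 1, 0]
  have h3 := h ![1, 0, 0, 0]
  simp [lform] at h0 h1 h2 h3
  ext i; fin_cases i <;> simp_all

def lformBilin : LinearMap.BilinForm ℝ (Fin 4 → ℝ) :=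
  LinearMap.mk₂ ℝ lform
    (fun x x' y => by simp only [lform, Pi.add_apply]; ring)
    (fun a x y => by simp only [lform, Pi.smul_apply, smul_eq_mul]; ring)
    (fun x y y' => by simp only [lform, Pi.add_apply]; ring)
    (fun a x y => by simp only [lform, Pi.smul_apply, smul_eq_mul]; ring)

theorem lformBilin_apply (x y : Fin 4 → ℝ) : lformBilin x y = lform x y := rfl

def lorentzFrame : Fin 4 → Fin 4 → ℝ :=
  let a := (√2)⁻¹
  ![![a, 0, 0, a], ![0, 1, 0, 0], ![0, 0, 1, 0], ![a, 0, 0, -a]]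

theorem lform_lorentzFrame (i j : Fin 4) :
    lform (lorentzFrame i) (lorentzFrame j) = if i = j then (if i = 0 then 1 else -1) else 0 := by
  have ha : (√2)⁻¹ * (√2)⁻¹ = (1 / 2 : ℝ) := by
    rw [← mul_inv, Real.mul_self_sqrt zero_le_two, one_div]
  fin_cases i <;> fin_cases j <;> simp [lform, lorentzFrame] <;> linarith

theorem linearIndependent_lorentzFrame : LinearIndependent ℝ lorentzFrame := by
  refine lformBilin.linearIndependent_of_iIsOrtho (fun i j hij => ?_) (fun i => ?_)
  · change lform _ _ = 0
    rw [lform_lorentzFrame, if_neg hij]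
  · rw [lformBilin_apply, lform_lorentzFrame, if_pos rfl]
    split_ifs <;> norm_num

/-- (a) `br` is bilinear, alternating, and satisfies the Jacobi identity,
so it makes ℝ⁴ a real Lie algebra; (b) `lform` is adjoint-invariant; (c) `lform` is
nondegenerate of Lorentz signature (1,3): there is a basis in which it is
`diag(1, −1, −1, −1)`. -/
theorem stmt17 :
    -- (a) bilinearity
    (∀ (a : ℝ) (x x' y : Fin 4 → ℝ), br (a • x + x') y = a • br x y + br x' y) ∧
    (∀ (a : ℝ) (x y y' : Fin 4 → ℝ), br x (a • y + y') = a • br x y + br x y') ∧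
    -- alternating
    (∀ x : Fin 4 → ℝ, br x x = 0) ∧
    -- Jacobi identity
    (∀ x y z : Fin 4 → ℝ, br x (br y z) + br y (br z x) + br z (br x y) = 0) ∧
    -- (b) adjoint invariance
    (∀ x y z : Fin 4 → ℝ, lform (br x y) z + lform y (br x z) = 0) ∧
    -- symmetry and bilinearity of the form
    (∀ x y : Fin 4 → ℝ, lform x y = lform y x) ∧
    (∀ (a : ℝ) (x x' y : Fin 4 → ℝ), lform (a • x + x') y = a * lform x y + lform x' y) ∧
    -- (c) nondegeneracy
    (∀ x : Fin 4 → ℝ, (∀ y : Fin 4 → ℝ, lform x y = 0) → x = 0) ∧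
    -- Lorentz signature (1,3)
    (∃ e : Fin 4 → (Fin 4 → ℝ), LinearIndependent ℝ e ∧
      ∀ i j, lform (e i) (e j) =
        if i = j then (if i = 0 then 1 else -1) else 0) :=
  ⟨br_smul_add_left, br_smul_add_right, br_self, br_jacobi, lform_br_add_lform_br, lform_comm,
    lform_smul_add_left, eq_zero_of_forall_lform_eq_zero,
    lorentzFrame, linearIndependent_lorentzFrame, lform_lorentzFrame⟩

end
end
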